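/- arXiv:2010.06170 — 3 statements merged into one kernel-verified Lean document; each statement's English description precedes it below -/
import Mathlib

section
/- For nonzero η, ζ ∈ R^2 with η + ζ = ξ, the null form symbol bound |η_1 ζ_2 − η_2 ζ_1| ≲ |ξ|^{1/2} (|η| + |ζ| − |ξ|)^{1/2} |η|^{1/2} |ζ|^{1/2} holds up to an absolute constant. -/
/-!
Write `a = ‖η‖`, `b = ‖ζ‖`, `c = ‖η + ζ‖`. The cross product `η₁ζ₂ − η₂ζ₁` is twice the area of
the triangle with sides `a, b, c`, so Heron's formula gives
`4 (η₁ζ₂ − η₂ζ₁)² = (a + b + c)(a + b − c)(c − a + b)(c + a − b)`.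
The triangle inequalities bound `(a + b + c)(c − a + b)(c + a − b)` by `12abc`, hence
`(η₁ζ₂ − η₂ζ₁)² ≤ 3abc(a + b − c)` and the bound holds with `C = √3`.
-/

open Real

lemma sq_cross_eq_norm_sq_mul_norm_sq_sub_inner_sq (η ζ : EuclideanSpace ℝ (Fin 2)) :
    (η 0 * ζ 1 - η 1 * ζ 0) ^ 2 = ‖η‖ ^ 2 * ‖ζ‖ ^ 2 - inner ℝ η ζ ^ 2 := by
  simp only [EuclideanSpace.norm_sq_eq, PiLp.inner_apply, Fin.sum_univ_two, Real.norm_eq_abs,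
    sq_abs, RCLike.inner_apply, conj_trivial]
  ring

lemma four_mul_sq_cross_eq_heron (η ζ : EuclideanSpace ℝ (Fin 2)) :
    4 * (η 0 * ζ 1 - η 1 * ζ 0) ^ 2 =
      (‖η‖ + ‖ζ‖ + ‖η + ζ‖) * (‖η‖ + ‖ζ‖ - ‖η + ζ‖) *
        (‖η + ζ‖ - ‖η‖ + ‖ζ‖) * (‖η + ζ‖ + ‖η‖ - ‖ζ‖) := by
  rw [sq_cross_eq_norm_sq_mul_norm_sq_sub_inner_sq]
  linear_combination (‖η + ζ‖ ^ 2 - ‖η‖ ^ 2 - ‖ζ‖ ^ 2 + 2 * inner ℝ η ζ) * norm_add_sq_real η ζ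

/- `c - a + b ≤ 2 min(b, c)` and `c + a - b ≤ 2 min(a, c)`, so each of the three summands of the
perimeter contributes at most `4abc`. -/
lemma perimeter_mul_le_twelve_mul {a b c : ℝ} (ha : 0 ≤ a) (hb : 0 ≤ b) (hc : 0 ≤ c)
    (hab : a ≤ b + c) (hba : b ≤ a + c) (hc' : c ≤ a + b) :
    (a + b + c) * (c - a + b) * (c + a - b) ≤ 12 * (a * b * c) := by
  have hle_cb : (c - a + b) * (c + a - b) ≤ 2 * c * (2 * b) := by nlinarith
  have hle_ac : (c - a + b) * (c + a - b) ≤ 2 * a * (2 * c) := by nlinarith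
  have hle_ab : (c - a + b) * (c + a - b) ≤ 2 * b * (2 * a) := by nlinarith
  nlinarith [mul_le_mul_of_nonneg_left hle_cb ha, mul_le_mul_of_nonneg_left hle_ac hb,
    mul_le_mul_of_nonneg_left hle_ab hc]

lemma sq_cross_le_three_mul (η ζ : EuclideanSpace ℝ (Fin 2)) :
    (η 0 * ζ 1 - η 1 * ζ 0) ^ 2 ≤
      3 * (‖η + ζ‖ * (‖η‖ + ‖ζ‖ - ‖η + ζ‖) * ‖η‖ * ‖ζ‖) := by
  have hη : ‖η‖ ≤ ‖ζ‖ + ‖η + ζ‖ := by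
    simpa [add_comm] using norm_sub_le (η + ζ) ζ
  have hζ : ‖ζ‖ ≤ ‖η‖ + ‖η + ζ‖ := by
    simpa [add_comm] using norm_sub_le (η + ζ) η
  have hξ : ‖η + ζ‖ ≤ ‖η‖ + ‖ζ‖ := norm_add_le η ζ
  have hper := perimeter_mul_le_twelve_mul (norm_nonneg η) (norm_nonneg ζ)
    (norm_nonneg (η + ζ)) hη hζ hξ
  nlinarith [mul_le_mul_of_nonneg_right hper (sub_nonneg.2 hξ), four_mul_sq_cross_eq_heron η ζ]

/-- elliptic symbol bound for the `Q₁₂` null form: there is an absolute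
constant `C > 0` such that for all nonzero `η, ζ ∈ ℝ²`, with `ξ = η + ζ`,
`|η₁ζ₂ − η₂ζ₁| ≤ C |ξ|^{1/2} (|η|+|ζ|−|ξ|)^{1/2} |η|^{1/2} |ζ|^{1/2}`. -/
theorem stmt6 : ∃ C > (0 : ℝ), ∀ (η ζ : EuclideanSpace ℝ (Fin 2)), η ≠ 0 → ζ ≠ 0 →
    |η 0 * ζ 1 - η 1 * ζ 0| ≤
      C * Real.sqrt ‖η + ζ‖ * Real.sqrt (‖η‖ + ‖ζ‖ - ‖η + ζ‖) *
        Real.sqrt ‖η‖ * Real.sqrt ‖ζ‖ := by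
  refine ⟨√3, by positivity, fun η ζ _ _ => ?_⟩
  have hs : 0 ≤ ‖η‖ + ‖ζ‖ - ‖η + ζ‖ := sub_nonneg.2 (norm_add_le η ζ)
  calc |η 0 * ζ 1 - η 1 * ζ 0|
      ≤ √(3 * (‖η + ζ‖ * (‖η‖ + ‖ζ‖ - ‖η + ζ‖) * ‖η‖ * ‖ζ‖)) :=
        Real.abs_le_sqrt (sq_cross_le_three_mul η ζ)
    _ = _ := by
        rw [Real.sqrt_mul (by norm_num), Real.sqrt_mul' _ (norm_nonneg ζ),
          Real.sqrt_mul' _ (norm_nonneg η), Real.sqrt_mul' _ hs]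
        ring
end

section
/- For nonzero ξ, η ∈ R^2 and i ∈ {1,2}, the symbol q_{0i}(ξ,η) := −⟨ξ⟩η_i + ξ_i⟨η⟩ satisfies |q_{0i}(ξ,η)| ≲ |ξ||η| ∠(ξ,η) + |ξ|/⟨η⟩ + |η|/⟨ξ⟩. -/
/-!
Write `⟨a⟩ = √(1 + a²)`. Splitting `⟨ξ⟩ = |ξ| + (⟨ξ⟩ - |ξ|)` and likewise for `η` gives
`q₀ᵢ(ξ,η) = |ξ||η| (ξᵢ/|ξ| - ηᵢ/|η|) + ξᵢ (⟨η⟩ - |η|) - (⟨ξ⟩ - |ξ|) ηᵢ`.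
The first term is controlled by chord ≤ arc on the unit sphere, the others by
`⟨a⟩ - a = 1 / (⟨a⟩ + a) ≤ 1 / ⟨a⟩`; so the constant `C = 1` works, in any dimension.
-/

open InnerProductGeometry RealInnerProductSpace

namespace Real

lemma le_sqrt_one_add_sq (a : ℝ) : a ≤ √(1 + a ^ 2) :=
  le_sqrt_of_sq_le (by linarith)

lemma sqrt_one_add_sq_sub_le {a : ℝ} (ha : 0 ≤ a) : √(1 + a ^ 2) - a ≤ (√(1 + a ^ 2))⁻¹ := by
  have hpos : 0 < √(1 + a ^ 2) := sqrt_pos.2 (by positivity)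
  have hsq : √(1 + a ^ 2) ^ 2 = 1 + a ^ 2 := sq_sqrt (by positivity)
  rw [← one_div, le_div_iff₀ hpos, sub_mul, ← sq, hsq]
  nlinarith [le_sqrt_one_add_sq a]

end Real

namespace InnerProductGeometry

variable {V : Type*} [NormedAddCommGroup V] [InnerProductSpace ℝ V]

lemma norm_sub_le_angle {u v : V} (hu : ‖u‖ = 1) (hv : ‖v‖ = 1) : ‖u - v‖ ≤ angle u v := by
  have hcos : ⟪u, v⟫ = Real.cos (angle u v) := by simp [cos_angle, hu, hv]
  have hsq : ‖u - v‖ ^ 2 ≤ angle u v ^ 2 := by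
    rw [norm_sub_sq_real, hu, hv, hcos]
    linarith [Real.one_sub_sq_div_two_le_cos (x := angle u v)]
  exact (pow_le_pow_iff_left₀ (norm_nonneg _) (angle_nonneg u v) two_ne_zero).1 hsq

lemma norm_inv_norm_smul_sub_le_angle {x y : V} (hx : x ≠ 0) (hy : y ≠ 0) :
    ‖‖x‖⁻¹ • x - ‖y‖⁻¹ • y‖ ≤ angle x y := by
  have h := norm_sub_le_angle (by simpa using norm_smul_inv_norm (𝕜 := ℝ) hx)
    (by simpa using norm_smul_inv_norm (𝕜 := ℝ) hy)
  rwa [angle_smul_left_of_pos _ _ (inv_pos.2 (norm_pos_iff.2 hx)),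
    angle_smul_right_of_pos _ _ (inv_pos.2 (norm_pos_iff.2 hy))] at h

end InnerProductGeometry

lemma EuclideanSpace.abs_apply_le_norm {ι : Type*} [Fintype ι] (x : EuclideanSpace ℝ ι) (i : ι) :
    |x i| ≤ ‖x‖ := by
  simpa using PiLp.norm_apply_le x i

theorem abs_neg_sqrt_mul_add_mul_sqrt_le {ι : Type*} [Fintype ι] {ξ η : EuclideanSpace ℝ ι}
    (hξ : ξ ≠ 0) (hη : η ≠ 0) (i : ι) :
    |-√(1 + ‖ξ‖ ^ 2) * η i + ξ i * √(1 + ‖η‖ ^ 2)| ≤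
      ‖ξ‖ * ‖η‖ * angle ξ η + ‖ξ‖ / √(1 + ‖η‖ ^ 2) + ‖η‖ / √(1 + ‖ξ‖ ^ 2) := by
  set s := √(1 + ‖ξ‖ ^ 2)
  set t := √(1 + ‖η‖ ^ 2)
  set w := ‖ξ‖⁻¹ • ξ - ‖η‖⁻¹ • η
  have hw : |w i| ≤ angle ξ η :=
    (w.abs_apply_le_norm i).trans (norm_inv_norm_smul_sub_le_angle hξ hη)
  have hdecomp : -s * η i + ξ i * t = ‖ξ‖ * ‖η‖ * w i + ξ i * (t - ‖η‖) - (s - ‖ξ‖) * η i := by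
    have hξ' := norm_ne_zero_iff.2 hξ
    have hη' := norm_ne_zero_iff.2 hη
    simp only [w, PiLp.sub_apply, PiLp.smul_apply, smul_eq_mul]
    field_simp
    ring
  have hs : 0 ≤ s - ‖ξ‖ := sub_nonneg.2 (Real.le_sqrt_one_add_sq _)
  have ht : 0 ≤ t - ‖η‖ := sub_nonneg.2 (Real.le_sqrt_one_add_sq _)
  calc |-s * η i + ξ i * t|
      ≤ |‖ξ‖ * ‖η‖ * w i| + |ξ i * (t - ‖η‖)| + |-((s - ‖ξ‖) * η i)| := by
        rw [hdecomp, sub_eq_add_neg]; exact abs_add_three _ _ _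
    _ = ‖ξ‖ * ‖η‖ * |w i| + |ξ i| * (t - ‖η‖) + (s - ‖ξ‖) * |η i| := by
        simp only [abs_neg, abs_mul, abs_norm, abs_of_nonneg hs, abs_of_nonneg ht]
    _ ≤ ‖ξ‖ * ‖η‖ * angle ξ η + ‖ξ‖ * t⁻¹ + s⁻¹ * ‖η‖ := by
        gcongr
        · exact ξ.abs_apply_le_norm i
        · exact Real.sqrt_one_add_sq_sub_le (norm_nonneg η)
        · exact Real.sqrt_one_add_sq_sub_le (norm_nonneg ξ)
        · exact η.abs_apply_le_norm i
    _ = ‖ξ‖ * ‖η‖ * angle ξ η + ‖ξ‖ / t + ‖η‖ / s := by ring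

/-- there is an absolute constant `C > 0` such that for all nonzero
`ξ, η ∈ ℝ²` and `i ∈ {1,2}`, the symbol `q₀ᵢ(ξ,η) = −⟨ξ⟩ηᵢ + ξᵢ⟨η⟩` satisfies
`|q₀ᵢ(ξ,η)| ≤ C (|ξ||η| ∠(ξ,η) + |ξ|/⟨η⟩ + |η|/⟨ξ⟩)`. -/
theorem stmt9 : ∃ C > (0 : ℝ), ∀ (ξ η : EuclideanSpace ℝ (Fin 2)), ξ ≠ 0 → η ≠ 0 →
    ∀ i : Fin 2,
    |-(Real.sqrt (1 + ‖ξ‖ ^ 2)) * η i + ξ i * Real.sqrt (1 + ‖η‖ ^ 2)| ≤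
      C * (‖ξ‖ * ‖η‖ * angle ξ η + ‖ξ‖ / Real.sqrt (1 + ‖η‖ ^ 2)
        + ‖η‖ / Real.sqrt (1 + ‖ξ‖ ^ 2)) :=
  ⟨1, one_pos, fun _ _ hξ hη i =>
    (abs_neg_sqrt_mul_add_mul_sqrt_le hξ hη i).trans_eq (one_mul _).symm⟩
end

section
/- The Fourier symbol bound for the Γ¹ null structure: with p(ξ,τ,η,λ) := −1 + (⟨ξ,η⟩ τλ)/(⟨ξ⟩²⟨η⟩²), for all nonzero ξ, η ∈ R² and all τ, λ ∈ R one has |p(ξ,τ,η,λ)| ≤ sin² ∠(ξ,η) + 1/⟨ξ⟩² + 1/⟨η⟩² + |τλ − ⟨ξ,η⟩|/(⟨ξ⟩⟨η⟩). -/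
/-! Write `A = 1 + ‖ξ‖²`, `B = 1 + ‖η‖²` and `i = ⟨ξ, η⟩`. Then
`p = -(1 - i² / (A B)) + i (τλ - i) / (A B)`. The first term is at most
`1 - i² / (‖ξ‖² ‖η‖²) = sin² ∠(ξ, η)` up to an error `≤ 1/A + 1/B`, and the second is at most
`|τλ - i| / (√A √B)` because `|i| ≤ ‖ξ‖ ‖η‖ ≤ √A √B`. -/

open InnerProductGeometry

theorem sq_div_mul_sub_sq_div_one_add_mul_le {i a b : ℝ} (ha : 0 ≤ a) (hb : 0 ≤ b)
    (h : i ^ 2 ≤ a * b) :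
    i ^ 2 / (a * b) - i ^ 2 / ((1 + a) * (1 + b)) ≤ 1 / (1 + a) + 1 / (1 + b) := by
  rcases (mul_nonneg ha hb).eq_or_lt with hab | hab
  · have hi : i ^ 2 = 0 := le_antisymm (hab ▸ h) (sq_nonneg i)
    rw [hi, zero_div, zero_div, sub_zero]
    positivity
  · rw [div_add_div _ _ (by positivity) (by positivity), div_sub_div _ _ hab.ne' (by positivity),
      div_le_div_iff₀ (by positivity) (by positivity)]
    nlinarith [mul_nonneg ha hb, sq_nonneg i, mul_le_mul_of_nonneg_left h (add_nonneg ha hb)]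

section InnerProductSpace

variable {E : Type*} [NormedAddCommGroup E] [InnerProductSpace ℝ E]

theorem sin_angle_sq (x y : E) :
    Real.sin (angle x y) ^ 2 = 1 - inner ℝ x y ^ 2 / (‖x‖ ^ 2 * ‖y‖ ^ 2) := by
  rw [Real.sin_sq, cos_angle, div_pow, mul_pow]

theorem real_inner_sq_le_norm_sq_mul_norm_sq (x y : E) :
    inner ℝ x y ^ 2 ≤ ‖x‖ ^ 2 * ‖y‖ ^ 2 := by
  rw [← mul_pow, ← sq_abs]
  exact pow_le_pow_left₀ (abs_nonneg _) (abs_real_inner_le_norm x y) 2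

theorem abs_real_inner_le_sqrt_one_add_sq_mul (x y : E) :
    |inner ℝ x y| ≤ √(1 + ‖x‖ ^ 2) * √(1 + ‖y‖ ^ 2) := by
  rw [← Real.sqrt_mul (by positivity)]
  refine Real.abs_le_sqrt ((real_inner_sq_le_norm_sq_mul_norm_sq x y).trans ?_)
  gcongr <;> linarith

theorem abs_neg_one_add_real_inner_mul_div_le (x y : E) (s : ℝ) :
    |-1 + inner ℝ x y * s / ((1 + ‖x‖ ^ 2) * (1 + ‖y‖ ^ 2))| ≤
      Real.sin (angle x y) ^ 2 + 1 / (1 + ‖x‖ ^ 2) + 1 / (1 + ‖y‖ ^ 2) +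
        |s - inner ℝ x y| / (√(1 + ‖x‖ ^ 2) * √(1 + ‖y‖ ^ 2)) := by
  set i := inner ℝ x y
  set c := √(1 + ‖x‖ ^ 2) * √(1 + ‖y‖ ^ 2)
  have hc : 0 < c := by positivity
  have hc_sq : c ^ 2 = (1 + ‖x‖ ^ 2) * (1 + ‖y‖ ^ 2) := by
    rw [mul_pow, Real.sq_sqrt (by positivity), Real.sq_sqrt (by positivity)]
  have hi : |i| ≤ c := abs_real_inner_le_sqrt_one_add_sq_mul x y
  have hi_sq : i ^ 2 ≤ c ^ 2 := sq_le_sq' (abs_le.mp hi).1 (abs_le.mp hi).2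
  have split : -1 + i * s / c ^ 2 = -(1 - i ^ 2 / c ^ 2) + i / c * ((s - i) / c) := by
    field_simp
    ring
  have first : |-(1 - i ^ 2 / c ^ 2)| ≤
      Real.sin (angle x y) ^ 2 + 1 / (1 + ‖x‖ ^ 2) + 1 / (1 + ‖y‖ ^ 2) := by
    have hle : i ^ 2 / c ^ 2 ≤ 1 := div_le_one_of_le₀ hi_sq (sq_nonneg c)
    have herr := sq_div_mul_sub_sq_div_one_add_mul_le (sq_nonneg ‖x‖) (sq_nonneg ‖y‖)
      (real_inner_sq_le_norm_sq_mul_norm_sq x y)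
    rw [abs_neg, abs_of_nonneg (sub_nonneg.mpr hle), sin_angle_sq, hc_sq]
    linarith
  have second : |i / c * ((s - i) / c)| ≤ |s - i| / c := by
    rw [abs_mul, abs_div, abs_div, abs_of_pos hc]
    exact mul_le_of_le_one_left (by positivity) ((div_le_one hc).mpr hi)
  rw [← hc_sq, split]
  exact (abs_add_le _ _).trans (add_le_add first second)

end InnerProductSpace

theorem stmt18_general (ξ η : EuclideanSpace ℝ (Fin 2))
    (τ lam : ℝ) :
    |(-1 : ℝ) + (inner ℝ ξ η : ℝ) * τ * lam / ((1 + ‖ξ‖ ^ 2) * (1 + ‖η‖ ^ 2))| ≤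
      Real.sin (angle ξ η) ^ 2 + 1 / (1 + ‖ξ‖ ^ 2) + 1 / (1 + ‖η‖ ^ 2) +
        |τ * lam - (inner ℝ ξ η : ℝ)| /
          (Real.sqrt (1 + ‖ξ‖ ^ 2) * Real.sqrt (1 + ‖η‖ ^ 2)) := by
  rw [mul_assoc (inner ℝ ξ η)]
  exact abs_neg_one_add_real_inner_mul_div_le ξ η (τ * lam)

/-- for nonzero `ξ, η ∈ ℝ²` and `τ, λ ∈ ℝ`, the symbol
`p(ξ,τ,η,λ) = −1 + ⟨ξ,η⟩τλ/(⟨ξ⟩²⟨η⟩²)` satisfies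
`|p| ≤ sin² ∠(ξ,η) + 1/⟨ξ⟩² + 1/⟨η⟩² + |τλ − ⟨ξ,η⟩|/(⟨ξ⟩⟨η⟩)`. -/
theorem stmt18 (ξ η : EuclideanSpace ℝ (Fin 2)) (hξ : ξ ≠ 0) (hη : η ≠ 0)
    (τ lam : ℝ) :
    |(-1 : ℝ) + (inner ℝ ξ η : ℝ) * τ * lam / ((1 + ‖ξ‖ ^ 2) * (1 + ‖η‖ ^ 2))| ≤
      Real.sin (angle ξ η) ^ 2 + 1 / (1 + ‖ξ‖ ^ 2) + 1 / (1 + ‖η‖ ^ 2) +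
        |τ * lam - (inner ℝ ξ η : ℝ)| /
          (Real.sqrt (1 + ‖ξ‖ ^ 2) * Real.sqrt (1 + ‖η‖ ^ 2)) :=
  stmt18_general ξ η τ lam
end
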